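/- arXiv:0910.1033 — 2 statements merged into one kernel-verified Lean document; each statement's English description precedes it below -/
import Mathlib

section
/- Let G be a topological group, let Γ be a subgroup of G, and let Q be a subgroup of Γ of finite index. Then the connected component of the identity of the topological closure of Γ is contained in the topological closure of Q. -/
/-!
Finitely many left cosets `γ Q` cover `Γ`, so finitely many closed cosets `γ cl(Q)` cover
`cl(Γ)`. Hence `cl(Q)` is a closed subgroup of finite index in the topological group `cl(Γ)`,
so it is also open, and a clopen subgroup contains the identity component.
-/

open scoped Pointwise

namespace Subgroup

variable {G : Type*} [Group G]

theorem coe_subset_iUnion_out_smul (H K : Subgroup G) :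
    (K : Set G) ⊆ ⋃ q : K ⧸ H.subgroupOf K, ((q.out : K) : G) • (H : Set G) := by
  intro x hx
  refine Set.mem_iUnion.2 ⟨QuotientGroup.mk ⟨x, hx⟩, Set.mem_smul_set_iff_inv_smul_mem.2 ?_⟩
  exact mem_subgroupOf.1 (QuotientGroup.eq.1 (QuotientGroup.out_eq' _))

variable [TopologicalSpace G] [IsTopologicalGroup G]

theorem connectedComponent_one_subset_of_isClosed_of_finiteIndex
    (H : Subgroup G) [H.FiniteIndex] (hH : IsClosed (H : Set G)) :
    connectedComponent (1 : G) ⊆ H :=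
  IsClopen.connectedComponent_subset ⟨hH, H.isOpen_of_isClosed_of_finiteIndex hH⟩ H.one_mem

theorem topologicalClosure_subset_iUnion_out_smul (H K : Subgroup G)
    [Finite (K ⧸ H.subgroupOf K)] :
    (K.topologicalClosure : Set G) ⊆
      ⋃ q : K ⧸ H.subgroupOf K, ((q.out : K) : G) • (H.topologicalClosure : Set G) :=
  closure_minimal
    ((coe_subset_iUnion_out_smul H K).trans <| Set.iUnion_mono fun _ =>
      Set.smul_set_mono H.le_topologicalClosure)
    (isClosed_iUnion_of_finite fun _ => H.isClosed_topologicalClosure.smul _)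

theorem relIndex_topologicalClosure_ne_zero {H K : Subgroup G} (h : H.relIndex K ≠ 0) :
    H.topologicalClosure.relIndex K.topologicalClosure ≠ 0 := by
  have : (H.subgroupOf K).FiniteIndex := ⟨h⟩
  set C := K.topologicalClosure
  have hsurj : Function.Surjective fun q : K ⧸ H.subgroupOf K =>
      ((⟨q.out, K.le_topologicalClosure q.out.2⟩ : C) : C ⧸ H.topologicalClosure.subgroupOf C) := by
    intro y
    obtain ⟨x, rfl⟩ := QuotientGroup.mk_surjective y
    obtain ⟨q, hq⟩ := Set.mem_iUnion.1 (topologicalClosure_subset_iUnion_out_smul H K x.2)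
    exact ⟨q, QuotientGroup.eq.2 (Set.mem_smul_set_iff_inv_smul_mem.1 hq)⟩
  have := Finite.of_surjective _ hsurj
  exact index_ne_zero_of_finite

end Subgroup

theorem connectedComponentIn_closure_subset_closure_of_finite_relindex_general
    {G : Type*} [Group G] [TopologicalSpace G] [IsTopologicalGroup G]
    (Γ Q : Subgroup G) (hfin : Q.relIndex Γ ≠ 0) :
    connectedComponentIn (Γ.topologicalClosure : Set G) 1 ⊆
      (Q.topologicalClosure : Set G) := by
  set C := Γ.topologicalClosure
  have : (Q.topologicalClosure.subgroupOf C).FiniteIndex :=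
    ⟨Subgroup.relIndex_topologicalClosure_ne_zero hfin⟩
  have hclosed : IsClosed (Q.topologicalClosure.subgroupOf C : Set C) :=
    Q.isClosed_topologicalClosure.preimage continuous_subtype_val
  rw [connectedComponentIn_eq_image C.one_mem]
  rintro _ ⟨x, hx, rfl⟩
  exact Subgroup.connectedComponent_one_subset_of_isClosed_of_finiteIndex _ hclosed hx

/-- Let `G` be a topological group, `Γ` a subgroup and `Q` a subgroup
of `Γ` of finite index.  Then the connected component of the identity of the topological
closure of `Γ` (i.e. the connected component of `1` within the subspace
`cl(Γ) ⊆ G`) is contained in the topological closure of `Q`. -/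
theorem connectedComponentIn_closure_subset_closure_of_finite_relindex
    {G : Type*} [Group G] [TopologicalSpace G] [IsTopologicalGroup G]
    (Γ Q : Subgroup G) (hQΓ : Q ≤ Γ) (hfin : Q.relIndex Γ ≠ 0) :
    connectedComponentIn (Γ.topologicalClosure : Set G) 1 ⊆
      (Q.topologicalClosure : Set G) :=
  connectedComponentIn_closure_subset_closure_of_finite_relindex_general Γ Q hfin
end

section
/- Let H be a closed subgroup of SO(3, ℝ) which contains the standard subgroup SO(2) consisting of the rotations about the third coordinate axis, i.e. the block matrices diag(A, 1) with A ∈ SO(2, ℝ). Then H is exactly one of: this copy of SO(2); its normalizer { diag(A, det A) : A ∈ O(2, ℝ) }, which is isomorphic to O(2); or the full group SO(3, ℝ). -/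
/-- `SO(3, ℝ)`: the subgroup of the orthogonal group `O(3, ℝ)` of matrices of
determinant `1`. -/
def SO3 : Subgroup ↥(Matrix.orthogonalGroup (Fin 3) ℝ) :=
  MonoidHom.ker
    (Matrix.detMonoidHom.comp (Matrix.orthogonalGroup (Fin 3) ℝ).subtype)

/-- The 3×3 block-diagonal matrix `diag(A, lam)` with upper-left 2×2 block `A` and
lower-right entry `lam`. -/
def diagBlock (A : Matrix (Fin 2) (Fin 2) ℝ) (lam : ℝ) : Matrix (Fin 3) (Fin 3) ℝ :=
  Matrix.of fun i j =>
    if hi : (i : ℕ) < 2 then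
      if hj : (j : ℕ) < 2 then A ⟨i, hi⟩ ⟨j, hj⟩ else 0
    else if (j : ℕ) < 2 then 0 else lam

/-- The standard copy of `SO(2)` in `SO(3, ℝ)`: rotations about the third coordinate
axis, i.e. the matrices `diag(A, 1)` with `A ∈ SO(2, ℝ)`. -/
def stdSO2 : Set ↥SO3 :=
  {x | ∃ A : Matrix (Fin 2) (Fin 2) ℝ, A ∈ Matrix.orthogonalGroup (Fin 2) ℝ ∧
    A.det = 1 ∧ ((x : ↥(Matrix.orthogonalGroup (Fin 3) ℝ)) : Matrix (Fin 3) (Fin 3) ℝ)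
      = diagBlock A 1}

/-- The normalizer of the standard `SO(2)` in `SO(3, ℝ)`: the matrices
`diag(A, det A)` with `A ∈ O(2, ℝ)`; it is isomorphic to `O(2)`. -/
def stdO2 : Set ↥SO3 :=
  {x | ∃ A : Matrix (Fin 2) (Fin 2) ℝ, A ∈ Matrix.orthogonalGroup (Fin 2) ℝ ∧
    ((x : ↥(Matrix.orthogonalGroup (Fin 3) ℝ)) : Matrix (Fin 3) (Fin 3) ℝ)
      = diagBlock A A.det}

/-!
An element `x` of `SO(3)` lies in `H` as soon as some element of `H` moves the north pole `e₃` to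
the same height `x₂₂`: multiplying on both sides by rotations about the third axis turns one into
the other. So `H` is determined by the set of heights of the orbit `H e₃`. Composing two elements of
`H` through a rotation about the third axis shows that with `cos α` and `cos β` also `cos (α + β)`
is a height, and that with `c` every value in `[2c² - 1, 1]` is one. Hence the angles whose cosine
is a height form an additive subgroup of `ℝ`; unless all heights are `±1` it is a neighbourhood of
`0`, hence all of `ℝ`, and `H = SO(3)`. Otherwise the heights are `{1}` or `{±1}`, which gives the
standard `SO(2)` or `O(2)`.
-/

open Matrix ComplexConjugate Topology

theorem AddSubgroup.eq_top_of_mem_nhds_zero {G : Type*} [TopologicalSpace G] [AddGroup G]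
    [IsTopologicalAddGroup G] [ConnectedSpace G] (A : AddSubgroup G)
    (hA : (A : Set G) ∈ 𝓝 0) : A = ⊤ := by
  have hopen := A.isOpen_of_mem_nhds hA
  rw [← SetLike.coe_set_eq, AddSubgroup.coe_top]
  exact IsClopen.eq_univ ⟨A.isClosed_of_isOpen hopen, hopen⟩ ⟨0, A.zero_mem⟩

theorem Circle.exists_mul_eq_of_norm_eq {z z' : ℂ} (h : ‖z‖ = ‖z'‖) :
    ∃ w : Circle, w * z = z' := by
  rcases eq_or_ne z 0 with rfl | hz
  · exact ⟨1, by simpa [eq_comm] using h⟩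
  · refine ⟨⟨z' / z, mem_sphere_zero_iff_norm.2 ?_⟩, div_mul_cancel₀ z' hz⟩
    rw [norm_div, h, div_self (h ▸ norm_ne_zero_iff.2 hz)]

section diagBlock

variable (A B : Matrix (Fin 2) (Fin 2) ℝ) (a b : ℝ)

theorem diagBlock_eq : diagBlock A a = !![A 0 0, A 0 1, 0; A 1 0, A 1 1, 0; 0, 0, a] := by
  ext i j
  fin_cases i <;> fin_cases j <;> simp [diagBlock]

@[simp]
theorem diagBlock_castSucc (i j : Fin 2) : diagBlock A a i.castSucc j.castSucc = A i j := by
  simp [diagBlock, Fin.is_le]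

theorem diagBlock_mul : diagBlock A a * diagBlock B b = diagBlock (A * B) (a * b) := by
  simp only [diagBlock_eq]
  ext i j
  fin_cases i <;> fin_cases j <;> simp [Matrix.mul_apply, Fin.sum_univ_three]

theorem diagBlock_transpose : (diagBlock A a)ᵀ = diagBlock Aᵀ a := by
  simp only [diagBlock_eq]
  ext i j
  fin_cases i <;> fin_cases j <;> simp

theorem diagBlock_one : diagBlock 1 1 = 1 := by
  rw [diagBlock_eq]
  ext i j
  fin_cases i <;> fin_cases j <;> simp

theorem det_diagBlock : (diagBlock A a).det = a * A.det := by
  rw [diagBlock_eq, det_fin_three, det_fin_two]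
  simp only [of_apply, cons_val', cons_val_zero, cons_val_one, cons_val, cons_val_fin_one]
  ring

variable {A B a b}

theorem eq_of_diagBlock_eq (h : diagBlock A a = diagBlock B b) : A = B := by
  ext i j
  simpa using congr_fun (congr_fun h i.castSucc) j.castSucc

end diagBlock

namespace SO3

open Complex

abbrev mat (x : SO3) : Matrix (Fin 3) (Fin 3) ℝ := x.1.1

variable (x y : SO3)

theorem mat_mul : mat (x * y) = mat x * mat y := rfl

theorem mat_inv : mat x⁻¹ = (mat x)ᵀ := rfl

theorem mat_mul_transpose : mat x * (mat x)ᵀ = 1 :=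
  (mem_orthogonalGroup_iff _ _).1 x.1.2

theorem transpose_mul_mat : (mat x)ᵀ * mat x = 1 :=
  (mem_orthogonalGroup_iff' _ _).1 x.1.2

theorem det_mat : (mat x).det = 1 := x.2

theorem sum_sq_col_two : mat x 0 2 ^ 2 + mat x 1 2 ^ 2 + mat x 2 2 ^ 2 = 1 := by
  have := congr_fun (congr_fun (transpose_mul_mat x) 2) 2
  simp only [mul_apply, Fin.sum_univ_three, transpose_apply, one_apply_eq] at this
  linear_combination this

theorem mat_two_two_mem_Icc : mat x 2 2 ∈ Set.Icc (-1) 1 := by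
  have := sum_sq_col_two x
  constructor <;> nlinarith [sq_nonneg (mat x 0 2), sq_nonneg (mat x 1 2)]

/-- The horizontal component of `x e₃`, as a complex number. -/
def col2 : ℂ := ⟨mat x 0 2, mat x 1 2⟩

theorem normSq_col2 : normSq (col2 x) = 1 - mat x 2 2 ^ 2 := by
  rw [normSq_mk, col2, ← sum_sq_col_two x]
  ring

theorem mat_inv_mul_two_two :
    mat (x⁻¹ * y) 2 2 = (conj (col2 x) * col2 y).re + mat x 2 2 * mat y 2 2 := by
  simp [mat_mul, mat_inv, mul_apply, Fin.sum_univ_three, col2]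

theorem exists_eq_diagBlock_of_sq_eq_one (h : mat x 2 2 ^ 2 = 1) :
    ∃ A ∈ orthogonalGroup (Fin 2) ℝ, A.det = mat x 2 2 ∧ mat x = diagBlock A (mat x 2 2) := by
  have hcol : col2 x = 0 := by rw [← normSq_eq_zero, normSq_col2, h, sub_self]
  have hrow : col2 x⁻¹ = 0 := by
    rw [← normSq_eq_zero, normSq_col2, mat_inv, transpose_apply, h, sub_self]
  simp only [col2, Complex.ext_iff, mat_inv, transpose_apply, zero_re, zero_im] at hcol hrow
  set A : Matrix (Fin 2) (Fin 2) ℝ := !![mat x 0 0, mat x 0 1; mat x 1 0, mat x 1 1]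
  have hx : mat x = diagBlock A (mat x 2 2) := by
    rw [diagBlock_eq]
    ext i j
    fin_cases i <;> fin_cases j <;> simp [A, hcol, hrow]
  have hdet : A.det = mat x 2 2 := by
    have := det_mat x
    rw [hx, det_diagBlock] at this
    linear_combination mat x 2 2 * this - A.det * h
  refine ⟨A, ?_, hdet, hx⟩
  rw [mem_orthogonalGroup_iff]
  have := mat_mul_transpose x
  rw [hx, diagBlock_transpose, diagBlock_mul, ← diagBlock_one] at this
  exact eq_of_diagBlock_eq this

variable {x}

theorem mem_stdSO2_iff : x ∈ stdSO2 ↔ mat x 2 2 = 1 := by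
  constructor
  · rintro ⟨A, -, -, hx⟩
    simp [hx, diagBlock]
  · intro h
    obtain ⟨A, hA, hdet, hx⟩ := exists_eq_diagBlock_of_sq_eq_one x (by rw [h, one_pow])
    exact ⟨A, hA, hdet.trans h, hx.trans (by rw [h])⟩

theorem mem_stdO2_iff : x ∈ stdO2 ↔ mat x 2 2 ^ 2 = 1 := by
  constructor
  · rintro ⟨A, -, hx : mat x = _⟩
    have h22 : mat x 2 2 = A.det := by simp [hx, diagBlock]
    have := det_mat x
    rw [hx, det_diagBlock] at this
    rw [h22, sq, this]
  · intro h
    obtain ⟨A, hA, hdet, hx⟩ := exists_eq_diagBlock_of_sq_eq_one x h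
    exact ⟨A, hA, hx.trans (by rw [hdet])⟩

def rot2 (w : Circle) : Matrix (Fin 2) (Fin 2) ℝ :=
  !![(w : ℂ).re, -(w : ℂ).im; (w : ℂ).im, (w : ℂ).re]

theorem rot2_mul_transpose (w : Circle) : rot2 w * (rot2 w)ᵀ = 1 := by
  have h := Circle.normSq_coe w
  rw [normSq_apply] at h
  ext i j
  fin_cases i <;> fin_cases j <;> simp [rot2, mul_apply] <;> linarith

theorem det_rot2 (w : Circle) : (rot2 w).det = 1 := by
  have h := Circle.normSq_coe w
  rw [normSq_apply] at h
  rw [rot2, det_fin_two_of]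
  linear_combination h

def rotZ (w : Circle) : SO3 :=
  ⟨⟨diagBlock (rot2 w) 1, by
    rw [mem_orthogonalGroup_iff, diagBlock_transpose, diagBlock_mul, rot2_mul_transpose, mul_one,
      diagBlock_one]⟩, by
    show (diagBlock (rot2 w) 1).det = 1
    rw [det_diagBlock, det_rot2, one_mul]⟩

theorem mat_rotZ (w : Circle) : mat (rotZ w) = diagBlock (rot2 w) 1 := rfl

theorem rotZ_mem_stdSO2 (w : Circle) : rotZ w ∈ stdSO2 :=
  mem_stdSO2_iff.2 (by simp [mat_rotZ, diagBlock])

theorem mat_rotZ_mul_two_two (w : Circle) : mat (rotZ w * x) 2 2 = mat x 2 2 := by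
  simp [mat_mul, mat_rotZ, diagBlock_eq, mul_apply, Fin.sum_univ_three]

theorem col2_rotZ_mul (w : Circle) : col2 (rotZ w * x) = w * col2 x := by
  apply Complex.ext <;>
    simp only [col2, mat_mul, mat_rotZ, rot2, diagBlock_eq, mul_apply, Fin.sum_univ_three, of_apply,
      cons_val', cons_val_zero, cons_val_one, cons_val, cons_val_fin_one, mul_re, mul_im] <;>
    ring

theorem exists_mem_stdSO2_mul_mul_eq {x z : SO3} (h : mat z 2 2 = mat x 2 2) :
    ∃ r ∈ stdSO2, ∃ k ∈ stdSO2, r * z * k = x := by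
  obtain ⟨w, hw⟩ : ∃ w : Circle, w * col2 z = col2 x := by
    apply Circle.exists_mul_eq_of_norm_eq
    rw [← sq_eq_sq₀ (norm_nonneg _) (norm_nonneg _), Complex.sq_norm, Complex.sq_norm,
      normSq_col2, normSq_col2, h]
  -- `rotZ w * z` and `x` have the same third column, so `(rotZ w * z)⁻¹ * x` fixes `e₃`.
  refine ⟨rotZ w, rotZ_mem_stdSO2 w, (rotZ w * z)⁻¹ * x, ?_, by group⟩
  rw [mem_stdSO2_iff, mat_inv_mul_two_two, col2_rotZ_mul, hw, mat_rotZ_mul_two_two, h,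
    ← normSq_eq_conj_mul_self, ofReal_re, normSq_col2]
  ring

end SO3

open SO3 Real

/-- The heights of the points `z e₃`, `z ∈ H`; the height of `z e₃` is the entry `z₂₂`. -/
def heights (H : Subgroup SO3) : Set ℝ := {c | ∃ z ∈ H, mat z 2 2 = c}

variable {H : Subgroup SO3}

theorem one_mem_heights : 1 ∈ heights H := ⟨1, H.one_mem, one_apply_eq 2⟩

theorem heights_subset_Icc : heights H ⊆ Set.Icc (-1) 1 := by
  rintro _ ⟨z, -, rfl⟩
  exact mat_two_two_mem_Icc z

theorem mem_iff_mat_two_two_mem_heights (hSO2 : stdSO2 ⊆ H) {x : SO3} :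
    x ∈ H ↔ mat x 2 2 ∈ heights H := by
  refine ⟨fun hx => ⟨x, hx, rfl⟩, ?_⟩
  rintro ⟨z, hz, h⟩
  obtain ⟨r, hr, k, hk, rfl⟩ := exists_mem_stdSO2_mul_mul_eq h
  exact mul_mem (mul_mem (hSO2 hr) hz) (hSO2 hk)

theorem mul_add_mem_heights (hSO2 : stdSO2 ⊆ H) {a b t : ℝ} (ha : a ∈ heights H)
    (hb : b ∈ heights H) (ht : t ^ 2 ≤ (1 - a ^ 2) * (1 - b ^ 2)) : a * b + t ∈ heights H := by
  obtain ⟨x, hx, rfl⟩ := ha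
  obtain ⟨y, hy, rfl⟩ := hb
  set ζ := conj (col2 x⁻¹) * col2 y
  have hζ : ‖ζ‖ ^ 2 = (1 - mat x 2 2 ^ 2) * (1 - mat y 2 2 ^ 2) := by
    rw [Complex.sq_norm, Complex.normSq_mul, Complex.normSq_conj, normSq_col2, normSq_col2]
    rfl
  have hτ : ‖(⟨t, √(‖ζ‖ ^ 2 - t ^ 2)⟩ : ℂ)‖ ^ 2 = ‖ζ‖ ^ 2 := by
    rw [Complex.sq_norm, Complex.normSq_mk, ← sq, ← sq, Real.sq_sqrt (by linarith)]
    ring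
  obtain ⟨w, hw⟩ := Circle.exists_mul_eq_of_norm_eq
    ((sq_eq_sq₀ (norm_nonneg _) (norm_nonneg _)).1 hτ.symm)
  refine ⟨x * rotZ w * y, mul_mem (mul_mem hx (hSO2 (rotZ_mem_stdSO2 w))) hy, ?_⟩
  rw [← inv_inv x, mul_assoc, mat_inv_mul_two_two, col2_rotZ_mul, mat_rotZ_mul_two_two,
    mul_left_comm, hw, inv_inv]
  simp only [mat_inv, transpose_apply]
  ring

theorem cos_add_mem_heights (hSO2 : stdSO2 ⊆ H) {α β : ℝ} (hα : cos α ∈ heights H)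
    (hβ : cos β ∈ heights H) : cos (α + β) ∈ heights H := by
  rw [cos_add, sub_eq_add_neg]
  apply mul_add_mem_heights hSO2 hα hβ
  rw [neg_sq, mul_pow, ← sin_sq, ← sin_sq]

theorem cos_mem_heights_of_le (hSO2 : stdSO2 ⊆ H) {c θ : ℝ} (hc : c ∈ heights H)
    (hθ : 2 * c ^ 2 - 1 ≤ cos θ) : cos θ ∈ heights H := by
  have := mul_add_mem_heights hSO2 hc hc (t := cos θ - c * c)
    (by nlinarith [mul_nonneg (sub_nonneg.2 (cos_le_one θ)) (sub_nonneg.2 hθ)])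
  rwa [add_sub_cancel] at this

theorem Icc_subset_heights (hSO2 : stdSO2 ⊆ H) {c : ℝ} (hc : c ∈ heights H) (hc1 : c ^ 2 < 1) :
    Set.Icc (-1) 1 ⊆ heights H := by
  let angles : AddSubgroup ℝ :=
    { carrier := {θ | cos θ ∈ heights H}
      add_mem' := cos_add_mem_heights hSO2
      zero_mem' := by simpa using one_mem_heights
      neg_mem' := by simp }
  -- `angles` contains the neighbourhood `{θ | 2c² - 1 < cos θ}` of `0`.
  have hangles : angles = ⊤ := by
    refine angles.eq_top_of_mem_nhds_zero (Filter.mem_of_superset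
      ((isOpen_lt continuous_const continuous_cos).mem_nhds ?_)
      fun θ hθ => cos_mem_heights_of_le hSO2 hc (le_of_lt hθ))
    rw [Set.mem_ofPred_eq, cos_zero]
    linarith
  intro d hd
  rw [← cos_arccos hd.1 hd.2]
  exact (hangles ▸ AddSubgroup.mem_top (arccos d) : arccos d ∈ angles)

theorem closed_subgroup_of_SO3_containing_SO2_general
    (H : Subgroup ↥SO3)
    (hSO2 : stdSO2 ⊆ (H : Set ↥SO3)) :
    (H : Set ↥SO3) = stdSO2 ∨ (H : Set ↥SO3) = stdO2 ∨ H = ⊤ := by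
  have hH (x : SO3) : x ∈ H ↔ mat x 2 2 ∈ heights H := mem_iff_mat_two_two_mem_heights hSO2
  by_cases h1 : heights H ⊆ {1}
  · left
    ext x
    rw [SetLike.mem_coe, hH, mem_stdSO2_iff]
    exact ⟨fun h => h1 h, fun h => h ▸ one_mem_heights⟩
  by_cases h2 : ∀ c ∈ heights H, c ^ 2 = 1
  · right; left
    obtain ⟨c, hc, hc1⟩ := Set.not_subset.1 h1
    have hc_neg : c = -1 := (sq_eq_one_iff.1 (h2 c hc)).resolve_left hc1
    ext x
    rw [SetLike.mem_coe, hH, mem_stdO2_iff]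
    refine ⟨h2 _, fun hx => ?_⟩
    rcases sq_eq_one_iff.1 hx with h | h
    · exact h ▸ one_mem_heights
    · exact h ▸ hc_neg ▸ hc
  · right; right
    push Not at h2
    obtain ⟨c, hc, hc1⟩ := h2
    have hc_lt : c ^ 2 < 1 :=
      (sq_le_one_iff_abs_le_one c |>.2 (abs_le.2 (heights_subset_Icc hc))).lt_of_ne hc1
    rw [Subgroup.eq_top_iff']
    exact fun x => (hH x).2 (Icc_subset_heights hSO2 hc hc_lt (mat_two_two_mem_Icc x))

/-- A closed subgroup `H` of `SO(3, ℝ)` containing the standard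
`SO(2)` (rotations about the third axis) is exactly one of: this copy of `SO(2)`,
its normalizer `{diag(A, det A) : A ∈ O(2, ℝ)} ≅ O(2)`, or all of `SO(3, ℝ)`. -/
theorem closed_subgroup_of_SO3_containing_SO2
    (H : Subgroup ↥SO3) (hclosed : IsClosed (H : Set ↥SO3))
    (hSO2 : stdSO2 ⊆ (H : Set ↥SO3)) :
    (H : Set ↥SO3) = stdSO2 ∨ (H : Set ↥SO3) = stdO2 ∨ H = ⊤ :=
  closed_subgroup_of_SO3_containing_SO2_general H hSO2
end
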